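/- Let ι : A ⥤ B be a fully faithful functor admitting a right adjoint r : B ⥤ A, with counit ε_b : ι(r(b)) ⟶ b. Then for any category E, precomposition with r induces a fully faithful functor Fun(A, E) → Fun(B, E), whose essential image consists exactly of those functors F : B ⥤ E such that F(ε_b) is an isomorphism for every b ∈ B. -/

import Mathlib

open CategoryTheory

/-- For a coreflective inclusion `ι ⊣ r` with `ι` fully faithful,
precomposition with `r` is fully faithful, with essential image the functors
inverting the counit. -/
theorem precomp_coreflector_fullyFaithful {A B E : Type*}
    [Category A] [Category B] [Category E]
    (ι : A ⥤ B) (r : B ⥤ A) (adj : ι ⊣ r) [ι.Full] [ι.Faithful] :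
    ((Functor.whiskeringLeft B A E).obj r).Full ∧ ((Functor.whiskeringLeft B A E).obj r).Faithful ∧
    ∀ F : B ⥤ E, (∃ G : A ⥤ E, Nonempty (r ⋙ G ≅ F)) ↔
      ∀ b : B, IsIso (F.map (adj.counit.app b)) := by
  -- the unit is an isomorphism since `ι` is fully faithful
  have hr : ∀ b : B, r.map (adj.counit.app b) = inv (adj.unit.app (r.obj b)) := by
    intro b
    rw [eq_comm, IsIso.inv_eq_of_hom_inv_id]
    exact adj.right_triangle_components b
  refine ⟨?_, ?_, ?_⟩
  · -- Full
    refine ⟨fun {G₁ G₂} τ => ?_⟩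
    refine ⟨{ app := fun a => G₁.map (adj.unit.app a) ≫ τ.app (ι.obj a) ≫
        G₂.map (inv (adj.unit.app a))
              naturality := fun a a' f => ?_ }, ?_⟩
    · have h1 := τ.naturality (ι.map f)
      simp only [Functor.whiskeringLeft_obj_obj, Functor.comp_map] at h1
      have h2 : f ≫ adj.unit.app a' = adj.unit.app a ≫ r.map (ι.map f) := by
        have := (adj.unit.naturality f).symm
        simp only [Functor.comp_map, Functor.id_map] at this
        exact this.symm
      have h3 : r.map (ι.map f) ≫ inv (adj.unit.app a') = inv (adj.unit.app a) ≫ f := by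
        rw [IsIso.comp_inv_eq, Category.assoc, h2]
        simp
      rw [← G₁.map_comp_assoc, h2, G₁.map_comp_assoc, reassoc_of% h1,
        ← G₂.map_comp, h3, G₂.map_comp]
      simp
    · ext b
      simp only [Functor.whiskeringLeft_obj_map, Functor.whiskerLeft_app]
      have h1 := τ.naturality (adj.counit.app b)
      simp only [Functor.whiskeringLeft_obj_obj, Functor.comp_map, Functor.id_obj, Functor.comp_obj,
        hr b] at h1
      rw [← h1, ← G₁.map_comp_assoc]
      simp
  · -- Faithful
    refine ⟨fun {G₁ G₂} α β h => ?_⟩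
    ext a
    have h1 := congrArg (fun τ => NatTrans.app τ (ι.obj a)) h
    simp only [Functor.whiskeringLeft_obj_map, Functor.whiskerLeft_app] at h1
    have hα := α.naturality (adj.unit.app a)
    have hβ := β.naturality (adj.unit.app a)
    simp only [Functor.id_obj, Functor.comp_obj] at hα hβ
    have : α.app a ≫ G₂.map (adj.unit.app a) = β.app a ≫ G₂.map (adj.unit.app a) := by
      rw [← hα, ← hβ, h1]
    exact (cancel_mono (G₂.map (adj.unit.app a))).mp this
  · intro F
    constructor
    · rintro ⟨G, ⟨e⟩⟩ b
      have h1 := e.hom.naturality (adj.counit.app b)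
      simp only [Functor.comp_map, Functor.id_obj, Functor.comp_obj] at h1
      have : F.map (adj.counit.app b) =
          e.inv.app _ ≫ G.map (r.map (adj.counit.app b)) ≫ e.hom.app b := by
        rw [h1]; simp
      rw [this, hr b]
      infer_instance
    · intro h
      refine ⟨ι ⋙ F, ⟨(Functor.associator r ι F).symm ≪≫ ?_⟩⟩
      have : ∀ b, IsIso ((Functor.whiskerRight adj.counit F).app b) := fun b => h b
      have : IsIso (Functor.whiskerRight adj.counit F) := NatIso.isIso_of_isIso_app _
      exact asIso (Functor.whiskerRight adj.counit F) ≪≫ F.leftUnitor
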